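/- There exist qubit states ρ₁, ρ₂ for which the coarse-graining map strictly increases trace distance: taking ρ₁ with Bloch vector (0,0,1) and ρ₂ with Bloch vector (0,0,1/2), one has D(ρ₁,ρ₂) = 1/4, while D(λ(ρ₁⊗ρ₁), λ(ρ₂⊗ρ₂)) = 7/16 > 1/4, where λ(ρ⊗ρ) = diag( ¼(1 + r_z)², ¼(1 − r_z)² + ½(1 − r_z²) ) with r_z the z-Bloch component of ρ. -/

import Mathlib

open Matrix Complex ComplexOrder

abbrev Mat (d : ℕ) := Matrix (Fin d) (Fin d) ℂ

/-- The extension `I_n ⊗ Λ` of a matrix map `Λ` by the identity on a first tensor factor. -/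
def matExt {α β : Type*} [Fintype α] [Fintype β] (n : ℕ)
    (Λ : Matrix α α ℂ → Matrix β β ℂ)
    (A : Matrix (Fin n × α) (Fin n × α) ℂ) :
    Matrix (Fin n × β) (Fin n × β) ℂ :=
  fun p q => Λ (fun k l => A (p.1, k) (q.1, l)) p.2 q.2

/-- The extension `Λ ⊗ I` of a matrix map `Λ` by the identity on a second tensor factor. -/
def extSecond {α β : Type*} [Fintype α] [Fintype β] (n : ℕ)
    (Λ : Matrix α α ℂ → Matrix β β ℂ)
    (A : Matrix (α × Fin n) (α × Fin n) ℂ) :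
    Matrix (β × Fin n) (β × Fin n) ℂ :=
  fun p q => Λ (fun k l => A (k, p.2) (l, q.2)) p.1 q.1

/-- A matrix map is positive if it preserves positive semidefiniteness. -/
def IsPosMap {α β : Type*} [Fintype α] [Fintype β]
    (Λ : Matrix α α ℂ → Matrix β β ℂ) : Prop :=
  ∀ A, A.PosSemidef → (Λ A).PosSemidef

/-- Complete positivity: every identity extension preserves positive semidefiniteness. -/
def IsCP {α β : Type*} [Fintype α] [Fintype β]
    (Λ : Matrix α α ℂ → Matrix β β ℂ) : Prop :=
  ∀ (n : ℕ) (A : Matrix (Fin n × α) (Fin n × α) ℂ),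
    A.PosSemidef → (matExt n Λ A).PosSemidef

/-- Trace preservation. -/
def IsTP {α β : Type*} [Fintype α] [Fintype β]
    (Λ : Matrix α α ℂ → Matrix β β ℂ) : Prop :=
  ∀ A, (Λ A).trace = A.trace

def IsCPTP {α β : Type*} [Fintype α] [Fintype β]
    (Λ : Matrix α α ℂ → Matrix β β ℂ) : Prop :=
  IsCP Λ ∧ IsTP Λ

/-- The positive semidefinite square root (the former `Matrix.PosSemidef.sqrt`). -/
noncomputable def psdSqrt {n : Type*} [Fintype n] [DecidableEq n] {A : Matrix n n ℂ}
    (hA : A.PosSemidef) : Matrix n n ℂ :=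
  (hA.1.eigenvectorUnitary : Matrix n n ℂ) *
    diagonal (fun i => ((Real.sqrt (hA.1.eigenvalues i) : ℝ) : ℂ)) *
    (star hA.1.eigenvectorUnitary : Matrix n n ℂ)

/-- The trace norm `‖A‖₁ = Tr √(AᴴA)`. -/
noncomputable def traceNorm {m : Type*} [Fintype m] [DecidableEq m] (A : Matrix m m ℂ) : ℝ :=
  ((psdSqrt (Matrix.posSemidef_conjTranspose_mul_self A)).trace).re

/-- The `n`-fold tensor power `Λ^{⊗n}` of a linear matrix map. -/
noncomputable def tensorPow {d : ℕ} (n : ℕ) (Λ : Mat d → Mat d)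
    (A : Matrix (Fin n → Fin d) (Fin n → Fin d) ℂ) :
    Matrix (Fin n → Fin d) (Fin n → Fin d) ℂ :=
  fun p q => ∑ i : Fin n → Fin d, ∑ j : Fin n → Fin d,
    A i j * ∏ k, Λ (Matrix.single (i k) (j k) 1) (p k) (q k)

/-- The (normalized) Choi matrix `(I ⊗ Λ)(|φ₊⟩⟨φ₊|)`. -/
noncomputable def choi {d : ℕ} (Λ : Mat d → Mat d) :
    Matrix (Fin d × Fin d) (Fin d × Fin d) ℂ :=
  fun p q => (1 / (d : ℂ)) * Λ (Matrix.single p.1 q.1 1) p.2 q.2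

noncomputable def σX : Mat 2 := !![0, 1; 1, 0]
noncomputable def σY : Mat 2 := !![0, -Complex.I; Complex.I, 0]
noncomputable def σZ : Mat 2 := !![1, 0; 0, -1]

/-- The single-collision channel Λ₁. -/
noncomputable def Lam1 (ε : ℝ) (ρ : Mat 2) : Mat 2 :=
  ((1 - 2*ε : ℝ) : ℂ) • ρ + ((ε : ℝ) : ℂ) • (σZ * ρ * σZ + σX * ρ * σX)

/-- The two-collision channel Λ₂. -/
noncomputable def Lam2 (ε : ℝ) (ρ : Mat 2) : Mat 2 :=
  (((1 - 2*ε)^2 + 4*ε^2 : ℝ) : ℂ) • ρ +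
    ((2*ε*(1 - 2*ε) : ℝ) : ℂ) • (σZ * ρ * σZ + σX * ρ * σX)

/-- A general qubit Pauli map. -/
noncomputable def pauliMap (q0 qx qy qz : ℝ) (ρ : Mat 2) : Mat 2 :=
  (q0 : ℂ) • ρ + (qx : ℂ) • (σX * ρ * σX) + (qy : ℂ) • (σY * ρ * σY) + (qz : ℂ) • (σZ * ρ * σZ)

/-- The qubit state with Bloch vector `(x, y, z)`. -/
noncomputable def bloch (x y z : ℝ) : Mat 2 :=
  (1/2 : ℂ) • !![1 + (z : ℂ), (x : ℂ) - Complex.I * (y : ℂ);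
                 (x : ℂ) + Complex.I * (y : ℂ), 1 - (z : ℂ)]

/-- The coarse-grained state `λ(ρ ⊗ ρ)` of a qubit with Bloch `z`-component `rz`. -/
noncomputable def cg (rz : ℝ) : Mat 2 :=
  !![(((1 + rz)^2 / 4 : ℝ) : ℂ), 0;
     0, (((1 - rz)^2 / 4 + (1 - rz^2) / 2 : ℝ) : ℂ)]

/-! All states involved are diagonal in the computational basis, so their trace distance is the
classical distance `|p - q|` between the weights `p, q` of `|0⟩`. The states `ρ₁, ρ₂` have
weights `1, 3/4`, and coarse-graining squares the weight `p = (1 + r_z) / 2`, which moves it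
further from `1`: `1 - p² = (1 - p)(1 + p)`. -/

open scoped MatrixOrder

lemma psdSqrt_eq_cfcSqrt {n : Type*} [Fintype n] [DecidableEq n] {A : Matrix n n ℂ}
    (hA : A.PosSemidef) : psdSqrt hA = CFC.sqrt A := by
  rw [CFC.sqrt_eq_real_sqrt A hA.nonneg, cfcₙ_eq_cfc, hA.1.cfc_eq]
  simp [psdSqrt, IsHermitian.cfc, Function.comp_def]

lemma traceNorm_diagonal_ofReal {m : Type*} [Fintype m] [DecidableEq m] (d : m → ℝ) :
    traceNorm (diagonal fun i => (d i : ℂ)) = ∑ i, |d i| := by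
  set D := diagonal fun i => (d i : ℂ)
  set absD := diagonal fun i => ((|d i| : ℝ) : ℂ)
  have hsq : absD * absD = Dᴴ * D := by
    simp [absD, D, diagonal_mul_diagonal, ← ofReal_mul, abs_mul_abs_self]
  have habs : 0 ≤ absD :=
    (PosSemidef.diagonal fun i => by simp [abs_nonneg]).nonneg
  rw [traceNorm, psdSqrt_eq_cfcSqrt, CFC.sqrt_unique hsq habs, trace_diagonal, re_sum]
  simp

noncomputable def diagQubit (p : ℝ) : Mat 2 := !![(p : ℂ), 0; 0, ((1 - p : ℝ) : ℂ)]

lemma diagQubit_eq_diagonal (p : ℝ) :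
    diagQubit p = diagonal fun i => ((![p, 1 - p] i : ℝ) : ℂ) := by
  ext i j; fin_cases i <;> fin_cases j <;> simp [diagQubit]

lemma traceNorm_diagQubit_sub (p q : ℝ) :
    traceNorm (diagQubit p - diagQubit q) = 2 * |p - q| := by
  rw [diagQubit_eq_diagonal, diagQubit_eq_diagonal, diagonal_sub]
  simp_rw [← ofReal_sub]
  rw [traceNorm_diagonal_ofReal, Fin.sum_univ_two]
  simp only [cons_val_zero, cons_val_one]
  rw [show 1 - p - (1 - q) = -(p - q) by ring, abs_neg, two_mul]

lemma bloch_zero_zero_eq_diagQubit (z : ℝ) : bloch 0 0 z = diagQubit ((1 + z) / 2) := by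
  ext i j; fin_cases i <;> fin_cases j <;> simp [bloch, diagQubit] <;> ring

lemma cg_eq_diagQubit (rz : ℝ) : cg rz = diagQubit ((1 + rz) ^ 2 / 4) := by
  ext i j; fin_cases i <;> fin_cases j <;> simp [cg, diagQubit]
  ring

/-- for the qubit states with Bloch vectors `(0,0,1)` and `(0,0,1/2)`, the
coarse-graining map strictly increases the trace distance: from `1/4` to `7/16`. -/
theorem coarse_graining_can_increase_distinguishability :
    (1/2 : ℝ) * traceNorm (bloch 0 0 (1/2) - bloch 0 0 1) = 1/4 ∧
    (1/2 : ℝ) * traceNorm (cg (1/2) - cg 1) = 7/16 ∧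
    (1/2 : ℝ) * traceNorm (bloch 0 0 (1/2) - bloch 0 0 1)
      < (1/2 : ℝ) * traceNorm (cg (1/2) - cg 1) := by
  have hbefore : (1/2 : ℝ) * traceNorm (bloch 0 0 (1/2) - bloch 0 0 1) = 1/4 := by
    rw [bloch_zero_zero_eq_diagQubit, bloch_zero_zero_eq_diagQubit, traceNorm_diagQubit_sub]
    norm_num [abs_of_neg]
  have hafter : (1/2 : ℝ) * traceNorm (cg (1/2) - cg 1) = 7/16 := by
    rw [cg_eq_diagQubit, cg_eq_diagQubit, traceNorm_diagQubit_sub]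
    norm_num [abs_of_neg]
  exact ⟨hbefore, hafter, by rw [hbefore, hafter]; norm_num⟩
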